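/- arXiv:1304.4210 — 5 statements merged into one kernel-verified Lean document; each statement's English description precedes it below -/
import Mathlib

section
/- Let λ₁ ≥ λ₂ ≥ 0 be integers with λ₁ + λ₂ even. Then the number of pairs of integers (μ₁, μ₂) with λ₁ ≥ μ₁ ≥ λ₂ ≥ |μ₂| and μ₁ + μ₂ even equals (λ₁ - λ₂)·λ₂ + (λ₁ + λ₂)/2 + 1. -/
lemma count_even_aux (a : ℤ) : ∀ m : ℕ,
    ((Finset.Icc (-(m:ℤ)) (m:ℤ)).filter (fun b => Even (a + b))).card
      = if Even (a + (m:ℤ)) then m + 1 else m := by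
  intro m
  induction m with
  | zero =>
      simp only [Nat.cast_zero, neg_zero, Finset.Icc_self, Finset.filter_singleton, add_zero]
      split <;> simp
  | succ m ih =>
      have hcast : ((m + 1 : ℕ) : ℤ) = (m : ℤ) + 1 := by push_cast; ring
      rw [hcast]
      have hdecomp : Finset.Icc (-((m:ℤ)+1)) ((m:ℤ)+1)
          = insert (-((m:ℤ)+1)) (insert ((m:ℤ)+1) (Finset.Icc (-(m:ℤ)) (m:ℤ))) := by
        ext x
        simp only [Finset.mem_Icc, Finset.mem_insert]
        omega
      rw [hdecomp, Finset.filter_insert, Finset.filter_insert]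
      by_cases h : Even (a + ((m:ℤ)+1))
      · have h' : Even (a + -((m:ℤ)+1)) := by
          rcases h with ⟨k, hk⟩
          exact ⟨k - (m+1), by linarith⟩
        have hm : ¬ Even (a + (m:ℤ)) := by
          rw [Int.even_iff] at h ⊢; omega
        rw [if_pos h', if_pos h]
        rw [Finset.card_insert_of_notMem, Finset.card_insert_of_notMem]
        · rw [ih, if_neg hm, if_pos h]
        · intro hx
          have := Finset.mem_of_mem_filter _ hx
          rw [Finset.mem_Icc] at this; omega
        · intro hx
          rcases Finset.mem_insert.mp hx with h1 | h1
          · omega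
          · have := Finset.mem_of_mem_filter _ h1
            rw [Finset.mem_Icc] at this; omega
      · have h' : ¬ Even (a + -((m:ℤ)+1)) := by
          intro hc
          exact h ⟨hc.choose + (m+1), by have := hc.choose_spec; linarith⟩
        have hm : Even (a + (m:ℤ)) := by
          rw [Int.even_iff] at h ⊢ <;> omega
        rw [if_neg h', if_neg h, ih, if_pos hm, if_neg h]

lemma outer_sum_aux (l2 : ℤ) (h2 : 0 ≤ l2) : ∀ n : ℕ,
    (∑ a ∈ Finset.Icc l2 (l2 + 2*(n:ℤ)), (if Even (a + l2) then l2 + 1 else l2))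
      = 2*(n:ℤ)*l2 + n + l2 + 1 := by
  intro n
  induction n with
  | zero =>
      simp only [Nat.cast_zero, mul_zero, add_zero, Finset.Icc_self, Finset.sum_singleton]
      rw [if_pos ⟨l2, by ring⟩]
      ring
  | succ n ih =>
      have hcast : ((n + 1 : ℕ) : ℤ) = (n : ℤ) + 1 := by push_cast; ring
      rw [hcast]
      have hdecomp : Finset.Icc l2 (l2 + 2*((n:ℤ)+1))
          = insert (l2 + 2*(n:ℤ) + 2) (insert (l2 + 2*(n:ℤ) + 1) (Finset.Icc l2 (l2 + 2*(n:ℤ)))) := by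
        ext x
        simp only [Finset.mem_Icc, Finset.mem_insert]
        omega
      rw [hdecomp, Finset.sum_insert, Finset.sum_insert]
      · rw [ih]
        rw [if_pos (by exact ⟨l2 + n + 1, by ring⟩), if_neg (by
          intro hc
          rcases hc with ⟨k, hk⟩
          omega)]
        ring
      · rw [Finset.mem_Icc]; omega
      · rw [Finset.mem_insert, Finset.mem_Icc]
        push_neg
        constructor
        · omega
        · intro _; omega

theorem stmt_2 (l1 l2 : ℤ) (h12 : l2 ≤ l1) (h2 : 0 ≤ l2)
    (heven : Even (l1 + l2)) :
    (((Finset.Icc l2 l1 ×ˢ Finset.Icc (-l2) l2).filter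
      (fun p : ℤ × ℤ => Even (p.1 + p.2))).card : ℤ)
      = (l1 - l2) * l2 + (l1 + l2) / 2 + 1 := by
  obtain ⟨n, hn⟩ : ∃ n : ℕ, l1 = l2 + 2*(n:ℤ) := by
    rcases heven with ⟨k, hk⟩
    refine ⟨(k - l2).toNat, ?_⟩
    have : (0:ℤ) ≤ k - l2 := by omega
    rw [Int.toNat_of_nonneg this]; omega
  obtain ⟨m, hm⟩ : ∃ m : ℕ, l2 = (m:ℤ) := ⟨l2.toNat, (Int.toNat_of_nonneg h2).symm⟩
  have hsplitN : ((Finset.Icc l2 l1 ×ˢ Finset.Icc (-l2) l2).filter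
      (fun p : ℤ × ℤ => Even (p.1 + p.2))).card
      = ∑ a ∈ Finset.Icc l2 l1, ((Finset.Icc (-l2) l2).filter (fun b => Even (a + b))).card := by
    rw [Finset.card_filter, Finset.sum_product]
    exact Finset.sum_congr rfl (fun a _ => (Finset.card_filter _ _).symm)
  rw [hsplitN]
  push_cast
  have hterm : ∀ a ∈ Finset.Icc l2 l1,
      (((Finset.Icc (-l2) l2).filter (fun b => Even (a + b))).card : ℤ)
        = (if Even (a + l2) then l2 + 1 else l2) := by
    intro a _
    rw [hm, count_even_aux a m]
    split <;> push_cast <;> ring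
  rw [Finset.sum_congr rfl hterm, hn, outer_sum_aux l2 h2 n]
  have hdiv : (l2 + 2*(n:ℤ) + l2) / 2 = l2 + n := by omega
  rw [hdiv]
  ring
end

section
/- Let λ₁ ≥ λ₂ ≥ λ₃ ≥ λ₄ be integers with λ₁ + λ₂ + λ₃ + λ₄ = 0 and λ₂ ≤ 0. Define d(λ₁,λ₂,λ₃,λ₄) as the number of triples of integers (μ₁, μ₂, μ₃) with λ₁ ≥ μ₁ ≥ λ₂ ≥ μ₂ ≥ λ₃ ≥ μ₃ ≥ λ₄ and μ₁ + μ₂ + μ₃ = 0, counted with weight equal to the dimension of the zero weight space of the GL₃-representation with highest weight (μ₁,μ₂,μ₃) (which is μ₂ - μ₃ + 1 if μ₂ ≤ 0 and μ₁ - μ₂ + 1 if μ₂ ≥ 0). Then d(λ₁,λ₂,λ₃,λ₄) = (1/2)(λ₂ - λ₃ + 1)(λ₃ - λ₄ + 1)(λ₂ - λ₄ + 2). -/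
/-!
Once `μ₂, μ₃` are chosen in their intervals, `μ₁ = -(μ₂ + μ₃)` is forced and automatically lies
in `[λ₂, λ₁]` because `λ₂ ≤ 0`; moreover `μ₂ ≤ λ₂ ≤ 0`, so the weight is always `μ₂ - μ₃ + 1`.
The count is thus the double sum of `μ₂ - μ₃ + 1` over a rectangle, which two Gauss sums evaluate.
-/

open Finset

theorem Int.sum_Icc_cast_mul_two {R : Type*} [CommRing R] {a b : ℤ} (h : a ≤ b + 1) :
    (∑ x ∈ Icc a b, (x : R)) * 2 = (a + b) * (b + 1 - a) := by
  induction b, (sub_le_iff_le_add.2 h : a - 1 ≤ b) using Int.leInduction with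
  | base => simp
  | succ b hb ih =>
    rw [← insert_Icc_right_eq_Icc_add_one (sub_le_iff_le_add.1 hb), sum_insert (by simp), add_mul,
      ih (sub_le_iff_le_add.1 hb)]
    push_cast
    ring

theorem Int.cast_card_Icc {R : Type*} [CommRing R] {a b : ℤ} (h : a ≤ b + 1) :
    (#(Icc a b) : R) = b + 1 - a := by
  rw [← Int.cast_natCast, Int.card_Icc_of_le a b h, Int.cast_sub, Int.cast_add, Int.cast_one]

theorem sum_Icc_prod_Icc_sub_add_one_mul_two {R : Type*} [CommRing R] {p q r s : ℤ}
    (hpq : p ≤ q + 1) (hrs : r ≤ s + 1) :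
    (∑ x ∈ Icc p q ×ˢ Icc r s, ((x.1 : R) - x.2 + 1)) * 2
      = (q + 1 - p) * (s + 1 - r) * (p + q - (r + s) + 2) := by
  have inner (a : ℤ) : (∑ b ∈ Icc r s, ((a : R) - b + 1)) * 2
      = (s + 1 - r) * (2 * a + 2) - (r + s) * (s + 1 - r) := by
    simp only [sub_add_eq_add_sub, sum_sub_distrib, sum_const, nsmul_eq_mul, sub_mul,
      Int.sum_Icc_cast_mul_two hrs, Int.cast_card_Icc hrs]
    ring
  rw [sum_product, sum_mul]
  simp_rw [inner]
  simp only [sum_sub_distrib, ← mul_sum, sum_add_distrib, sum_const, nsmul_eq_mul]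
  rw [mul_comm 2, Int.sum_Icc_cast_mul_two hpq, Int.cast_card_Icc hpq]
  ring

theorem sum_interlacing_sum_eq_zero {M : Type*} [AddCommMonoid M] {l1 l2 l3 l4 : ℤ}
    (h23 : l3 ≤ l2) (hsum : l1 + l2 + l3 + l4 = 0) (h2 : l2 ≤ 0)
    (f : ℤ × ℤ × ℤ → M) :
    ∑ μ ∈ (Icc l2 l1 ×ˢ Icc l3 l2 ×ˢ Icc l4 l3).filter (fun μ => μ.1 + μ.2.1 + μ.2.2 = 0), f μ
      = ∑ p ∈ Icc l3 l2 ×ˢ Icc l4 l3, f (-(p.1 + p.2), p) := by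
  refine sum_nbij' Prod.snd (fun p => (-(p.1 + p.2), p)) ?_ ?_ ?_ (fun _ _ => rfl) ?_ <;>
    simp only [mem_filter, mem_product, mem_Icc, Prod.forall, Prod.mk.injEq, and_true]
  · intro m1 m2 m3 hμ
    exact hμ.1.2
  · intro m2 m3 hp
    omega
  · intro m1 m2 m3 hμ
    omega
  · intro m1 m2 m3 hμ
    rw [show m1 = -(m2 + m3) by omega]

theorem stmt_4_general (l1 l2 l3 l4 : ℤ) (h23 : l3 ≤ l2) (h34 : l4 ≤ l3)
    (hsum : l1 + l2 + l3 + l4 = 0) (h2 : l2 ≤ 0) :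
    ((∑ μ ∈ (Finset.Icc l2 l1 ×ˢ Finset.Icc l3 l2 ×ˢ Finset.Icc l4 l3).filter
        (fun μ : ℤ × ℤ × ℤ => μ.1 + μ.2.1 + μ.2.2 = 0),
      (if μ.2.1 ≤ 0 then μ.2.1 - μ.2.2 + 1 else μ.1 - μ.2.1 + 1) : ℤ) : ℚ)
    = (1/2 : ℚ) * (l2 - l3 + 1) * (l3 - l4 + 1) * (l2 - l4 + 2) := by
  rw [sum_interlacing_sum_eq_zero h23 hsum h2]
  have hbranch : ∀ p ∈ Icc l3 l2 ×ˢ Icc l4 l3,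
      (if p.1 ≤ 0 then p.1 - p.2 + 1 else -(p.1 + p.2) - p.1 + 1) = p.1 - p.2 + 1 :=
    fun p hp => if_pos ((mem_Icc.1 (mem_product.1 hp).1).2.trans h2)
  rw [sum_congr rfl hbranch]
  push_cast
  linear_combination (1 / 2 : ℚ) *
    sum_Icc_prod_Icc_sub_add_one_mul_two (R := ℚ) (by omega : l3 ≤ l2 + 1) (by omega : l4 ≤ l3 + 1)

theorem stmt_4 (l1 l2 l3 l4 : ℤ) (h12 : l2 ≤ l1) (h23 : l3 ≤ l2) (h34 : l4 ≤ l3)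
    (hsum : l1 + l2 + l3 + l4 = 0) (h2 : l2 ≤ 0) :
    ((∑ μ ∈ (Finset.Icc l2 l1 ×ˢ Finset.Icc l3 l2 ×ˢ Finset.Icc l4 l3).filter
        (fun μ : ℤ × ℤ × ℤ => μ.1 + μ.2.1 + μ.2.2 = 0),
      (if μ.2.1 ≤ 0 then μ.2.1 - μ.2.2 + 1 else μ.1 - μ.2.1 + 1) : ℤ) : ℚ)
    = (1/2 : ℚ) * (l2 - l3 + 1) * (l3 - l4 + 1) * (l2 - l4 + 2) :=
  stmt_4_general l1 l2 l3 l4 h23 h34 hsum h2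
end

section
/- Let λ₁ ≥ λ₂ ≥ λ₃ ≥ λ₄ be integers with λ₁ + λ₂ + λ₃ + λ₄ = 0 and λ₃ ≥ 0. Then the sum over all integer triples (μ₁, μ₂, μ₃) with λ₁ ≥ μ₁ ≥ λ₂ ≥ μ₂ ≥ λ₃ ≥ μ₃ ≥ λ₄ and μ₁ + μ₂ + μ₃ = 0 of the quantity (μ₁ - μ₂ + 1) equals (1/2)(λ₁ - λ₂ + 1)(λ₂ - λ₃ + 1)(λ₁ - λ₃ + 2). -/
/-!
Since `λ₃ ≥ 0` and `λ₄ = -(λ₁ + λ₂ + λ₃)`, the constraint `λ₃ ≥ μ₃ ≥ λ₄` on `μ₃ = -(μ₁ + μ₂)` is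
automatic once `λ₁ ≥ μ₁ ≥ λ₂ ≥ μ₂ ≥ λ₃`. So the sum runs over the full rectangle of pairs
`(μ₁, μ₂)`, where it splits into two arithmetic series.
-/

open Finset

lemma Int.two_mul_sum_Icc (m n : ℤ) (h : m ≤ n) :
    2 * ∑ i ∈ Icc m n, i = (m + n) * (n - m + 1) := by
  induction n, h using Int.leInduction with
  | base => rw [Icc_self, sum_singleton]; ring
  | succ n hmn ih =>
    rw [← insert_Icc_right_eq_Icc_add_one (by omega), sum_insert (by simp), mul_add, ih]
    ring

lemma sum_product_sub_add_one {R : Type*} [CommRing R] (s t : Finset R) :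
    ∑ p ∈ s ×ˢ t, (p.1 - p.2 + 1) = #t * ∑ a ∈ s, a - #s * ∑ b ∈ t, b + #s * #t := by
  simp only [sum_product, sum_add_distrib, sum_sub_distrib, sum_const, nsmul_eq_mul, mul_one,
    sum_comm (s := s) (t := t), card_product, Nat.cast_mul]
  rw [← mul_sum, ← mul_sum]

lemma sum_interlacing_zero_sum_eq_sum_product {M : Type*} [AddCommMonoid M]
    (l1 l2 l3 l4 : ℤ) (hsum : l1 + l2 + l3 + l4 = 0) (h3 : 0 ≤ l3) (f : ℤ × ℤ × ℤ → M) :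
    ∑ μ ∈ (Icc l2 l1 ×ˢ Icc l3 l2 ×ˢ Icc l4 l3).filter (fun μ => μ.1 + μ.2.1 + μ.2.2 = 0), f μ
      = ∑ p ∈ Icc l2 l1 ×ˢ Icc l3 l2, f (p.1, p.2, -(p.1 + p.2)) := by
  refine sum_nbij' (fun μ => (μ.1, μ.2.1)) (fun p => (p.1, p.2, -(p.1 + p.2)))
    ?_ ?_ ?_ (by simp) ?_
  · intro μ hμ
    simp only [mem_filter, mem_product, mem_Icc] at hμ ⊢
    omega
  · intro p hp
    simp only [mem_filter, mem_product, mem_Icc] at hp ⊢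
    omega
  · rintro ⟨μ1, μ2, μ3⟩ hμ
    simp only [mem_filter, mem_product, mem_Icc] at hμ
    simp only [Prod.mk.injEq, true_and]
    omega
  · rintro ⟨μ1, μ2, μ3⟩ hμ
    simp only [mem_filter, mem_product, mem_Icc] at hμ
    rw [show μ3 = -(μ1 + μ2) by omega]

theorem stmt_5_general (l1 l2 l3 l4 : ℤ) (h12 : l2 ≤ l1) (h23 : l3 ≤ l2)
    (hsum : l1 + l2 + l3 + l4 = 0) (h3 : 0 ≤ l3) :
    ((∑ μ ∈ (Finset.Icc l2 l1 ×ˢ Finset.Icc l3 l2 ×ˢ Finset.Icc l4 l3).filter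
        (fun μ : ℤ × ℤ × ℤ => μ.1 + μ.2.1 + μ.2.2 = 0),
      (μ.1 - μ.2.1 + 1) : ℤ) : ℚ)
    = (1/2 : ℚ) * (l1 - l2 + 1) * (l2 - l3 + 1) * (l1 - l3 + 2) := by
  have h2 : 2 * ∑ μ ∈ (Icc l2 l1 ×ˢ Icc l3 l2 ×ˢ Icc l4 l3).filter
        (fun μ : ℤ × ℤ × ℤ => μ.1 + μ.2.1 + μ.2.2 = 0), (μ.1 - μ.2.1 + 1)
      = (l1 - l2 + 1) * (l2 - l3 + 1) * (l1 - l3 + 2) := by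
    rw [sum_interlacing_zero_sum_eq_sum_product l1 l2 l3 l4 hsum h3, sum_product_sub_add_one,
      Int.card_Icc_of_le _ _ (by omega), Int.card_Icc_of_le _ _ (by omega)]
    linear_combination (l2 - l3 + 1) * Int.two_mul_sum_Icc _ _ h12
      - (l1 - l2 + 1) * Int.two_mul_sum_Icc _ _ h23
  field_simp
  exact_mod_cast (mul_comm _ _).trans h2

theorem stmt_5 (l1 l2 l3 l4 : ℤ) (h12 : l2 ≤ l1) (h23 : l3 ≤ l2) (h34 : l4 ≤ l3)
    (hsum : l1 + l2 + l3 + l4 = 0) (h3 : 0 ≤ l3) :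
    ((∑ μ ∈ (Finset.Icc l2 l1 ×ˢ Finset.Icc l3 l2 ×ˢ Finset.Icc l4 l3).filter
        (fun μ : ℤ × ℤ × ℤ => μ.1 + μ.2.1 + μ.2.2 = 0),
      (μ.1 - μ.2.1 + 1) : ℤ) : ℚ)
    = (1/2 : ℚ) * (l1 - l2 + 1) * (l2 - l3 + 1) * (l1 - l3 + 2) :=
  stmt_5_general l1 l2 l3 l4 h12 h23 hsum h3
end

section
/- Let λ₁ ≥ λ₂ ≥ λ₃ ≥ λ₄ be integers with λ₁ + λ₂ + λ₃ + λ₄ = 0, λ₂ > 0, λ₃ < 0, and λ₁ + λ₄ ≥ 0. Define d(λ₁,λ₂,λ₃,λ₄) = Σ over integer triples (μ₁,μ₂,μ₃) with λᵢ ≥ μᵢ ≥ λᵢ₊₁ for i = 1,2,3 and μ₁+μ₂+μ₃ = 0 of (μ₂ - μ₃ + 1 if μ₂ ≤ 0, else μ₁ - μ₂ + 1). Then d(λ₁,λ₂,λ₃,λ₄) = -(1/2)(λ₁ + λ₂ + 2λ₃ + 1)(-λ₁λ₂ + 2λ₂² + λ₁λ₃ + λ₂λ₃ + λ₃² - λ₁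 + λ₃ - 2). -/
private def Fq (c0 c1 c2 : ℚ) (x : ℤ) : ℚ :=
  c0*(x:ℚ) + c1*((x:ℚ)*((x:ℚ)-1)/2) + c2*(((x:ℚ)-1)*(x:ℚ)*(2*(x:ℚ)-1)/6)

private lemma my_telescope (F : ℤ → ℚ) (a b : ℤ) (hab : a ≤ b + 1) :
    ∑ x ∈ Finset.Icc a b, (F (x + 1) - F x) = F (b + 1) - F a := by
  obtain ⟨n, rfl⟩ : ∃ n : ℕ, b = a - 1 + n := ⟨(b - (a - 1)).toNat, by omega⟩
  clear hab
  induction n with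
  | zero =>
      rw [Finset.Icc_eq_empty (by omega), Finset.sum_empty,
        show a - 1 + ((0:ℕ):ℤ) + 1 = a by push_cast; ring, sub_self]
  | succ k ih =>
      have hc : ((k + 1 : ℕ) : ℤ) = (k : ℤ) + 1 := by push_cast; ring
      rw [hc]
      have h1 : Finset.Icc a (a - 1 + ((k:ℤ) + 1))
          = insert (a - 1 + (k:ℤ) + 1) (Finset.Icc a (a - 1 + (k:ℤ))) := by
        ext x
        simp only [Finset.mem_Icc, Finset.mem_insert]
        omega
      rw [h1, Finset.sum_insert (by simp only [Finset.mem_Icc]; omega), ih,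
        show a - 1 + ((k:ℤ) + 1) + 1 = a - 1 + (k:ℤ) + 1 + 1 by ring]
      ring

private lemma my_sum_anti (f : ℤ → ℚ) (c0 c1 c2 : ℚ)
    (h : ∀ x : ℤ, f x = Fq c0 c1 c2 (x + 1) - Fq c0 c1 c2 x) (a b : ℤ)
    (hab : a ≤ b + 1) :
    ∑ x ∈ Finset.Icc a b, f x = Fq c0 c1 c2 (b + 1) - Fq c0 c1 c2 a := by
  rw [Finset.sum_congr rfl (fun x _ => h x), my_telescope _ a b hab]

theorem stmt_6 (l1 l2 l3 l4 : ℤ) (h12 : l2 ≤ l1) (h23 : l3 ≤ l2) (h34 : l4 ≤ l3)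
    (hsum : l1 + l2 + l3 + l4 = 0) (h2 : 0 < l2) (h3 : l3 < 0) (h14 : 0 ≤ l1 + l4) :
    ((∑ μ ∈ (Finset.Icc l2 l1 ×ˢ Finset.Icc l3 l2 ×ˢ Finset.Icc l4 l3).filter
        (fun μ : ℤ × ℤ × ℤ => μ.1 + μ.2.1 + μ.2.2 = 0),
      (if μ.2.1 ≤ 0 then μ.2.1 - μ.2.2 + 1 else μ.1 - μ.2.1 + 1) : ℤ) : ℚ)
    = -(1/2 : ℚ) * (l1 + l2 + 2*l3 + 1) *
        (-l1*l2 + 2*l2^2 + l1*l3 + l2*l3 + l3^2 - l1 + l3 - 2) := by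
  have hl4 : l4 = -l1 - l2 - l3 := by omega
  subst hl4
  have key : (∑ μ ∈ (Finset.Icc l2 l1 ×ˢ Finset.Icc l3 l2 ×ˢ
        Finset.Icc (-l1 - l2 - l3) l3).filter
        (fun μ : ℤ × ℤ × ℤ => μ.1 + μ.2.1 + μ.2.2 = 0),
      (if μ.2.1 ≤ 0 then μ.2.1 - μ.2.2 + 1 else μ.1 - μ.2.1 + 1) : ℤ)
      = ∑ μ3 ∈ Finset.Icc (-l1 - l2 - l3) l3,
          ((∑ μ2 ∈ Finset.Icc (max l3 (-l1 - μ3)) 0, (μ2 - μ3 + 1)) +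
           (∑ μ2 ∈ Finset.Icc 1 (min l2 (-l2 - μ3)), (-2*μ2 - μ3 + 1))) := by
    rw [Finset.sum_filter, Finset.sum_product]
    simp only [Finset.sum_product]
    rw [Finset.sum_comm]
    refine Eq.trans (Finset.sum_congr rfl (fun μ2 _ => Finset.sum_comm)) ?_
    rw [Finset.sum_comm]
    refine Finset.sum_congr rfl (fun μ3 hμ3 => ?_)
    simp only [Finset.mem_Icc] at hμ3
    have inner1 : ∀ μ2 : ℤ, (∑ μ1 ∈ Finset.Icc l2 l1,
        if μ1 + μ2 + μ3 = 0 then (if μ2 ≤ 0 then μ2 - μ3 + 1 else μ1 - μ2 + 1) else 0)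
        = (if l2 ≤ -μ2 - μ3 ∧ -μ2 - μ3 ≤ l1 then
            (if μ2 ≤ 0 then μ2 - μ3 + 1 else -2*μ2 - μ3 + 1) else 0) := by
      intro μ2
      have hc : ∀ μ1 ∈ Finset.Icc l2 l1,
          (if μ1 + μ2 + μ3 = 0 then (if μ2 ≤ 0 then μ2 - μ3 + 1 else μ1 - μ2 + 1) else 0)
          = (if μ1 = -μ2 - μ3 then (if μ2 ≤ 0 then μ2 - μ3 + 1 else μ1 - μ2 + 1) else 0) := by
        intro μ1 _
        split_ifs <;> omega
      rw [Finset.sum_congr rfl hc, Finset.sum_ite_eq']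
      simp only [Finset.mem_Icc]
      split_ifs <;> omega
    rw [Finset.sum_congr rfl (fun μ2 _ => inner1 μ2), ← Finset.sum_filter]
    have hset : (Finset.Icc l3 l2).filter (fun μ2 => l2 ≤ -μ2 - μ3 ∧ -μ2 - μ3 ≤ l1)
        = Finset.Icc (max l3 (-l1 - μ3)) 0 ∪ Finset.Icc 1 (min l2 (-l2 - μ3)) := by
      ext x
      simp only [Finset.mem_filter, Finset.mem_Icc, Finset.mem_union]
      omega
    rw [hset, Finset.sum_union (by
      rw [Finset.disjoint_left]
      intro a ha ha'
      simp only [Finset.mem_Icc] at ha ha'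
      omega)]
    congr 1
    · exact Finset.sum_congr rfl (fun x hx => by
        simp only [Finset.mem_Icc] at hx
        rw [if_pos (by omega)])
    · exact Finset.sum_congr rfl (fun x hx => by
        simp only [Finset.mem_Icc] at hx
        rw [if_neg (by omega)])
  rw [key, Int.cast_sum]
  have E : ∀ μ3 ∈ Finset.Icc (-l1 - l2 - l3) l3,
      ((((∑ μ2 ∈ Finset.Icc (max l3 (-l1 - μ3)) 0, (μ2 - μ3 + 1)) +
        (∑ μ2 ∈ Finset.Icc 1 (min l2 (-l2 - μ3)), (-2*μ2 - μ3 + 1)) : ℤ)) : ℚ)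
      = (1 - (μ3:ℚ))*(1 - ((max l3 (-l1 - μ3) : ℤ) : ℚ))
        - ((max l3 (-l1 - μ3) : ℤ) : ℚ)*(((max l3 (-l1 - μ3) : ℤ) : ℚ) - 1)/2
        - (l2:ℚ)^2 - (l2:ℚ)*(μ3:ℚ) := by
    intro μ3 hμ3
    simp only [Finset.mem_Icc] at hμ3
    rw [Int.cast_add, Int.cast_sum, Int.cast_sum,
      my_sum_anti (fun x : ℤ => ((x - μ3 + 1 : ℤ) : ℚ)) (1 - (μ3:ℚ)) 1 0
        (fun x => by simp only [Fq]; push_cast; ring) _ _ (by omega),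
      my_sum_anti (fun x : ℤ => ((-2*x - μ3 + 1 : ℤ) : ℚ)) (1 - (μ3:ℚ)) (-2) 0
        (fun x => by simp only [Fq]; push_cast; ring) _ _ (by omega)]
    rcases le_total l2 (-l2 - μ3) with h | h
    · rw [min_eq_left h]
      simp only [Fq]
      push_cast
      ring
    · rw [min_eq_right h]
      simp only [Fq]
      push_cast
      ring
  refine Eq.trans (Finset.sum_congr rfl E) ?_
  have hsplit : Finset.Icc (-l1 - l2 - l3) l3
      = Finset.Icc (-l1 - l2 - l3) (min l3 (-l1 - l3)) ∪
        Finset.Icc (min l3 (-l1 - l3) + 1) l3 := by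
    ext x
    simp only [Finset.mem_Icc, Finset.mem_union]
    omega
  rw [hsplit, Finset.sum_union (by
    rw [Finset.disjoint_left]
    intro a ha ha'
    simp only [Finset.mem_Icc] at ha ha'
    omega)]
  have hp1 : ∑ μ3 ∈ Finset.Icc (-l1 - l2 - l3) (min l3 (-l1 - l3)),
      ((1 - (μ3:ℚ))*(1 - ((max l3 (-l1 - μ3) : ℤ) : ℚ))
        - ((max l3 (-l1 - μ3) : ℤ) : ℚ)*(((max l3 (-l1 - μ3) : ℤ) : ℚ) - 1)/2
        - (l2:ℚ)^2 - (l2:ℚ)*(μ3:ℚ))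
      = Fq (1 + (l1:ℚ)/2 - (l1:ℚ)^2/2 - (l2:ℚ)^2) (-2*(l1:ℚ) - 1/2 - (l2:ℚ)) (-3/2)
          (min l3 (-l1 - l3) + 1)
        - Fq (1 + (l1:ℚ)/2 - (l1:ℚ)^2/2 - (l2:ℚ)^2) (-2*(l1:ℚ) - 1/2 - (l2:ℚ)) (-3/2)
          (-l1 - l2 - l3) := by
    refine Eq.trans (Finset.sum_congr rfl (fun x hx => ?_))
      (my_sum_anti
        (fun x : ℤ => (1 + (l1:ℚ)/2 - (l1:ℚ)^2/2 - (l2:ℚ)^2)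
          + (-2*(l1:ℚ) - 1/2 - (l2:ℚ))*(x:ℚ) + (-3/2)*(x:ℚ)^2)
        (1 + (l1:ℚ)/2 - (l1:ℚ)^2/2 - (l2:ℚ)^2) (-2*(l1:ℚ) - 1/2 - (l2:ℚ)) (-3/2)
        (fun x => by simp only [Fq]; push_cast; ring) _ _ (by omega))
    simp only [Finset.mem_Icc] at hx
    rw [show max l3 (-l1 - x) = -l1 - x by omega]
    push_cast
    ring
  have hp2 : ∑ μ3 ∈ Finset.Icc (min l3 (-l1 - l3) + 1) l3,
      ((1 - (μ3:ℚ))*(1 - ((max l3 (-l1 - μ3) : ℤ) : ℚ))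
        - ((max l3 (-l1 - μ3) : ℤ) : ℚ)*(((max l3 (-l1 - μ3) : ℤ) : ℚ) - 1)/2
        - (l2:ℚ)^2 - (l2:ℚ)*(μ3:ℚ))
      = Fq (1 - (l3:ℚ) - (l3:ℚ)*((l3:ℚ)-1)/2 - (l2:ℚ)^2) ((l3:ℚ) - 1 - (l2:ℚ)) 0
          (l3 + 1)
        - Fq (1 - (l3:ℚ) - (l3:ℚ)*((l3:ℚ)-1)/2 - (l2:ℚ)^2) ((l3:ℚ) - 1 - (l2:ℚ)) 0
          (min l3 (-l1 - l3) + 1) := by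
    refine Eq.trans (Finset.sum_congr rfl (fun x hx => ?_))
      (my_sum_anti
        (fun x : ℤ => (1 - (l3:ℚ) - (l3:ℚ)*((l3:ℚ)-1)/2 - (l2:ℚ)^2)
          + ((l3:ℚ) - 1 - (l2:ℚ))*(x:ℚ))
        (1 - (l3:ℚ) - (l3:ℚ)*((l3:ℚ)-1)/2 - (l2:ℚ)^2) ((l3:ℚ) - 1 - (l2:ℚ)) 0
        (fun x => by simp only [Fq]; push_cast; ring) _ _ (by omega))
    simp only [Finset.mem_Icc] at hx
    rw [show max l3 (-l1 - x) = l3 by omega]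
    push_cast
    ring
  rw [hp1, hp2]
  rcases le_total l3 (-l1 - l3) with h | h
  · rw [min_eq_left h]
    simp only [Fq]
    push_cast
    ring
  · rw [min_eq_right h]
    simp only [Fq]
    push_cast
    ring
end

section
/- Let λ₁ ≥ λ₂ ≥ λ₃ ≥ λ₄ be integers with λ₁ + λ₂ + λ₃ + λ₄ = 0, λ₂ > 0, λ₃ < 0, and λ₁ + λ₄ ≤ 0. Define d(λ₁,λ₂,λ₃,λ₄) = Σ over integer triples (μ₁,μ₂,μ₃) with λᵢ ≥ μᵢ ≥ λᵢ₊₁ for i = 1,2,3 and μ₁+μ₂+μ₃ = 0 of (μ₂ - μ₃ + 1 if μ₂ ≤ 0, else μ₁ - μ₂ + 1). Then d(λ₁,λ₂,λ₃,λ₄) = (1/2)(-λ₁ + λ₂ - 1)(-λ₁λ₂ + λ₁λ₃ + λ₂λ₃ + 3λ₃² - λ₁ - 2λ₂ - λ₃ - 2). -/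
lemma IccInterIcc (a b c d : ℤ) :
    Finset.Icc a b ∩ Finset.Icc c d = Finset.Icc (max a c) (min b d) := by
  ext z; simp only [Finset.mem_inter, Finset.mem_Icc]; omega

lemma IccIoc (m n : ℤ) : Finset.Icc m n = Finset.Ioc (m-1) n := by
  ext z; simp only [Finset.mem_Icc, Finset.mem_Ioc]; omega

lemma masterIoc (f : ℤ → ℚ) (p q r : ℚ) (m : ℤ) :
    ∀ n : ℤ, m ≤ n → (∀ y : ℤ, m < y → y ≤ n → f y = p*(y:ℚ)^2 + q*y + r) →
    ∑ y ∈ Finset.Ioc m n, f y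
      = p*((n:ℚ)*(n+1)*(2*n+1) - (m:ℚ)*(m+1)*(2*m+1))/6
        + q*((n:ℚ)*(n+1) - (m:ℚ)*(m+1))/2 + r*((n:ℚ)-m) := by
  refine Int.le_induction ?_ ?_
  · intro _; rw [Finset.Ioc_self, Finset.sum_empty]; ring
  · intro n hn ih hf
    have hins : Finset.Ioc m (n+1) = insert (n+1) (Finset.Ioc m n) := by
      ext z; simp only [Finset.mem_Ioc, Finset.mem_insert]; omega
    rw [hins, Finset.sum_insert (by simp only [Finset.mem_Ioc]; omega),
      ih (fun y h1 h2 => hf y h1 (by omega)), hf (n+1) (by omega) le_rfl]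
    push_cast; ring

lemma masterIcc (f : ℤ → ℚ) (q r : ℚ) (m n : ℤ) (h : m ≤ n + 1)
    (hf : ∀ x : ℤ, m ≤ x → x ≤ n → f x = q*(x:ℚ) + r) :
    ∑ x ∈ Finset.Icc m n, f x
      = q*((n:ℚ)*(n+1) - ((m:ℚ)-1)*m)/2 + r*((n:ℚ)+1-m) := by
  rw [IccIoc, masterIoc f 0 q r (m-1) n (by omega)
    (fun y h1 h2 => by rw [hf y (by omega) h2]; ring)]
  push_cast; ring

lemma sumSplit (f : ℤ → ℚ) {a b c : ℤ} (h1 : a ≤ b) (h2 : b ≤ c) :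
    ∑ y ∈ Finset.Ioc a c, f y
      = ∑ y ∈ Finset.Ioc a b, f y + ∑ y ∈ Finset.Ioc b c, f y := by
  rw [← Finset.Ioc_union_Ioc_eq_Ioc h1 h2, Finset.sum_union (by
    rw [Finset.disjoint_left]
    intro z hz1 hz2
    rw [Finset.mem_Ioc] at hz1 hz2
    omega)]

theorem stmt_7 (l1 l2 l3 l4 : ℤ) (h12 : l2 ≤ l1) (h23 : l3 ≤ l2) (h34 : l4 ≤ l3)
    (hsum : l1 + l2 + l3 + l4 = 0) (h2 : 0 < l2) (h3 : l3 < 0) (h14 : l1 + l4 ≤ 0) :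
    ((∑ μ ∈ (Finset.Icc l2 l1 ×ˢ Finset.Icc l3 l2 ×ˢ Finset.Icc l4 l3).filter
        (fun μ : ℤ × ℤ × ℤ => μ.1 + μ.2.1 + μ.2.2 = 0),
      (if μ.2.1 ≤ 0 then μ.2.1 - μ.2.2 + 1 else μ.1 - μ.2.1 + 1) : ℤ) : ℚ)
    = (1/2 : ℚ) * (-l1 + l2 - 1) *
        (-l1*l2 + l1*l3 + l2*l3 + 3*l3^2 - l1 - 2*l2 - l3 - 2) := by
  have hd : l4 = -l1 - l2 - l3 := by omega
  subst hd
  push_cast [apply_ite (fun z : ℤ => (z : ℚ))]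
  rw [Finset.sum_filter, Finset.sum_product]
  simp only [Finset.sum_product]
  rw [Finset.sum_comm]
  have hz : ∀ y x : ℤ,
      (∑ z ∈ Finset.Icc (-l1 - l2 - l3) l3,
        if x + y + z = 0 then (if y ≤ 0 then (y:ℚ) - z + 1 else (x:ℚ) - y + 1) else 0)
      = (if (-x-y) ∈ Finset.Icc (-l1 - l2 - l3) l3
          then (if y ≤ 0 then (y:ℚ) - (↑(-x-y):ℚ) + 1 else (x:ℚ) - y + 1) else 0) := by
    intro y x
    rw [Finset.sum_congr rfl
      (fun z _ => if_congr (show x + y + z = 0 ↔ z = -x-y by omega) rfl rfl),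
      Finset.sum_ite_eq' (Finset.Icc (-l1 - l2 - l3) l3) (-x-y)
        (fun z => if y ≤ 0 then (y:ℚ) - z + 1 else (x:ℚ) - y + 1)]
  simp only [hz, Finset.mem_Icc]
  have hx : ∀ y : ℤ,
      (∑ x ∈ Finset.Icc l2 l1,
        if -l1 - l2 - l3 ≤ -x - y ∧ -x - y ≤ l3
          then (if y ≤ 0 then (y:ℚ) - (↑(-x-y):ℚ) + 1 else (x:ℚ) - y + 1) else 0)
      = ∑ x ∈ Finset.Icc (max l2 (-y-l3)) (min l1 (l1+l2+l3-y)),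
          (if y ≤ 0 then (y:ℚ) - (↑(-x-y):ℚ) + 1 else (x:ℚ) - y + 1) := by
    intro y
    rw [Finset.sum_congr rfl (fun x _ => if_congr
        (show -l1 - l2 - l3 ≤ -x - y ∧ -x - y ≤ l3 ↔ x ∈ Finset.Icc (-y-l3) (l1+l2+l3-y) by
          rw [Finset.mem_Icc]; omega) rfl rfl),
      Finset.sum_ite_mem, IccInterIcc]
  simp only [hx]
  obtain ⟨k1, hk1⟩ : ∃ k : ℤ, k = max (l3-1) (-l1-l3-1) := ⟨_, rfl⟩
  obtain ⟨k2, hk2⟩ : ∃ k : ℤ, k = max (l3-1) (-l2-l3) := ⟨_, rfl⟩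
  obtain ⟨m5, hm5⟩ : ∃ k : ℤ, k = min (l1+l3) l2 := ⟨_, rfl⟩
  rw [IccIoc l3 l2,
    sumSplit _ (show l3-1 ≤ k1 by omega) (show k1 ≤ l2 by omega),
    sumSplit _ (show k1 ≤ k2 by omega) (show k2 ≤ l2 by omega),
    sumSplit _ (show k2 ≤ (0:ℤ) by omega) (show (0:ℤ) ≤ l2 by omega),
    sumSplit _ (show (0:ℤ) ≤ l2+l3 by omega) (show l2+l3 ≤ l2 by omega),
    sumSplit _ (show l2+l3 ≤ m5 by omega) (show m5 ≤ l2 by omega)]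
  have T1 : ∑ y ∈ Finset.Ioc (l3-1) k1,
      (∑ x ∈ Finset.Icc (max l2 (-y-l3)) (min l1 (l1+l2+l3-y)),
        (if y ≤ 0 then (y:ℚ) - (↑(-x-y):ℚ) + 1 else (x:ℚ) - y + 1)) = 0 := by
    apply Finset.sum_eq_zero
    intro y hy
    rw [Finset.mem_Ioc] at hy
    rw [Finset.Icc_eq_empty (show ¬ (max l2 (-y-l3) ≤ min l1 (l1+l2+l3-y)) by omega),
      Finset.sum_empty]
  have T6 : ∑ y ∈ Finset.Ioc m5 l2,
      (∑ x ∈ Finset.Icc (max l2 (-y-l3)) (min l1 (l1+l2+l3-y)),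
        (if y ≤ 0 then (y:ℚ) - (↑(-x-y):ℚ) + 1 else (x:ℚ) - y + 1)) = 0 := by
    apply Finset.sum_eq_zero
    intro y hy
    rw [Finset.mem_Ioc] at hy
    rw [Finset.Icc_eq_empty (show ¬ (max l2 (-y-l3) ≤ min l1 (l1+l2+l3-y)) by omega),
      Finset.sum_empty]
  have T2 := masterIoc
    (fun y => ∑ x ∈ Finset.Icc (max l2 (-y-l3)) (min l1 (l1+l2+l3-y)),
        (if y ≤ 0 then (y:ℚ) - (↑(-x-y):ℚ) + 1 else (x:ℚ) - y + 1))
    (3/2) (2*(l1:ℚ)+(l3:ℚ)+5/2)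
    (((l1:ℚ)^2+(l1:ℚ)-(l3:ℚ)^2-(l3:ℚ))/2 + (l1:ℚ)+(l3:ℚ)+1)
    k1 k2 (by omega) ?hf2
  case hf2 =>
    intro y hy1 hy2
    rw [show max l2 (-y-l3) = -y-l3 by omega, show min l1 (l1+l2+l3-y) = l1 by omega,
      masterIcc _ 1 (2*(y:ℚ)+1) (-y-l3) l1 (by omega)
        (fun x hx1 hx2 => by rw [if_pos (show y ≤ 0 by omega)]; push_cast; ring)]
    push_cast; ring
  have T3 := masterIoc
    (fun y => ∑ x ∈ Finset.Icc (max l2 (-y-l3)) (min l1 (l1+l2+l3-y)),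
        (if y ≤ 0 then (y:ℚ) - (↑(-x-y):ℚ) + 1 else (x:ℚ) - y + 1))
    0 (2*((l1:ℚ)+1-(l2:ℚ)))
    (((l1:ℚ)^2+(l1:ℚ)-(l2:ℚ)^2+(l2:ℚ))/2 + (l1:ℚ)+1-(l2:ℚ))
    k2 0 (by omega) ?hf3
  case hf3 =>
    intro y hy1 hy2
    rw [show max l2 (-y-l3) = l2 by omega, show min l1 (l1+l2+l3-y) = l1 by omega,
      masterIcc _ 1 (2*(y:ℚ)+1) l2 l1 (by omega)
        (fun x hx1 hx2 => by rw [if_pos (show y ≤ 0 by omega)]; push_cast; ring)]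
    push_cast; ring
  have T4 := masterIoc
    (fun y => ∑ x ∈ Finset.Icc (max l2 (-y-l3)) (min l1 (l1+l2+l3-y)),
        (if y ≤ 0 then (y:ℚ) - (↑(-x-y):ℚ) + 1 else (x:ℚ) - y + 1))
    0 (-((l1:ℚ)+1-(l2:ℚ)))
    (((l1:ℚ)^2+(l1:ℚ)-(l2:ℚ)^2+(l2:ℚ))/2 + (l1:ℚ)+1-(l2:ℚ))
    0 (l2+l3) (by omega) ?hf4
  case hf4 =>
    intro y hy1 hy2
    rw [show max l2 (-y-l3) = l2 by omega, show min l1 (l1+l2+l3-y) = l1 by omega,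
      masterIcc _ 1 (1-(y:ℚ)) l2 l1 (by omega)
        (fun x hx1 hx2 => by rw [if_neg (show ¬ y ≤ 0 by omega)]; push_cast; ring)]
    push_cast; ring
  have T5 := masterIoc
    (fun y => ∑ x ∈ Finset.Icc (max l2 (-y-l3)) (min l1 (l1+l2+l3-y)),
        (if y ≤ 0 then (y:ℚ) - (↑(-x-y):ℚ) + 1 else (x:ℚ) - y + 1))
    (3/2) (-2*((l1:ℚ)+(l2:ℚ)+(l3:ℚ))+(l2:ℚ)-5/2)
    ((((l1:ℚ)+(l2:ℚ)+(l3:ℚ))^2+((l1:ℚ)+(l2:ℚ)+(l3:ℚ))-(l2:ℚ)^2+(l2:ℚ))/2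
      + (l1:ℚ)+(l3:ℚ)+1)
    (l2+l3) m5 (by omega) ?hf5
  case hf5 =>
    intro y hy1 hy2
    rw [show max l2 (-y-l3) = l2 by omega,
      show min l1 (l1+l2+l3-y) = l1+l2+l3-y by omega,
      masterIcc _ 1 (1-(y:ℚ)) l2 (l1+l2+l3-y) (by omega)
        (fun x hx1 hx2 => by rw [if_neg (show ¬ y ≤ 0 by omega)]; push_cast; ring)]
    push_cast; ring
  rw [T1, T2, T3, T4, T5, T6]
  clear T1 T2 T3 T4 T5 T6 hz hx
  rcases le_total (-l1-l3-1) (l3-1) with h1 | h1 <;>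
    rcases le_total (-l2-l3) (l3-1) with hh2 | hh2 <;>
      rcases le_total (l1+l3) l2 with hh3 | hh3 <;>
  · first
      | rw [show k1 = l3-1 by omega] | rw [show k1 = -l1-l3-1 by omega]
    first
      | rw [show k2 = l3-1 by omega] | rw [show k2 = -l2-l3 by omega]
    first
      | rw [show m5 = l1+l3 by omega] | rw [show m5 = l2 by omega]
    push_cast
    ring
end
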